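/- arXiv:2311.08594 — 3 statements merged into one kernel-verified Lean document; each statement's English description precedes it below -/
import Mathlib

section
/- Let p(θ_{1:T}) be a Wiener process with standard deviation σ_θ (i.e., θ_1 ~ N(0, σ_θ²) and θ_t | θ_{t-1} ~ N(θ_{t-1}, σ_θ²)), and define q(θ_{1:T}) ∝ p(θ_{1:T}) · ∏_{t=1}^T exp{-((θ_t - μ_t)/σ_t)²/2} for reals μ_1,...,μ_T and positive reals σ_1,...,σ_T. Then q is a Linear Gaussian Model: θ_t | θ_{t-1} ~ N(μ̃_t, σ̃_t²) with σ̃_t = σ_θ√(1-ρ_t) and μ̃_t = (λ_θ θ_{t-1} + λ_t μ_t + ρ_{t+1} λ_θ τ_{t+1}) / (λ_θ + λ_t + ρ_{t+1} λ_θ), where λ_θ = 1/σ_θ², λ_t = 1/σ_t², and ρ_t, τ_t satisfy the backward recursions ρ_t = (λ_t + ρ_{t+1}λ_θ)/(λ_θ + λ_t + ρ_{t+1}λ_θ) with ρ_{T+1}=0, and τ_t = (λ_t μ_t + ρ_{t+1}λ_θ τ_{t+1})/(λ_t + ρ_{t+1}λ_θ) with τ_{T+1}=0 (using the convention θ_0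 = 0). -/
/-!
Backward message passing. With `λ = 1/σθ²`, the message
`m_t(θ_t) = exp(-ρ_{t+1} λ (θ_t - τ_{t+1})² / 2)` collects the potentials after time `t`.
Completing the square twice shows
`N(θ_t; θ_{t-1}, σθ²) · exp(-((θ_t - μ_t)/σ_t)²/2) · m_t(θ_t)
  = K_t · N(θ_t; μ̃_t, σ̃_t²) · m_{t-1}(θ_{t-1})`
with `K_t > 0` independent of `θ`, the recursions for `ρ` and `τ` being exactly what makes the
message keep its form. Multiplying over `t`, the messages telescope: `m_T = 1` since
`ρ_{T+1} = 0`, and `m_0` is a constant since `θ_0 = 0`.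
-/

open Finset

/-- Univariate Gaussian density with mean `m` and variance `v`. -/
noncomputable def gaussDensity (x m v : ℝ) : ℝ :=
  (Real.sqrt (2 * Real.pi * v))⁻¹ * Real.exp (-(x - m) ^ 2 / (2 * v))

/-- Unnormalized Gaussian potential in `x` with centre `m` and precision `a`. -/
noncomputable def gaussPotential (x m a : ℝ) : ℝ :=
  Real.exp (-(a * (x - m) ^ 2) / 2)

lemma gaussPotential_pos (x m a : ℝ) : 0 < gaussPotential x m a :=
  Real.exp_pos _

@[simp]
lemma gaussPotential_zero (x m : ℝ) : gaussPotential x m 0 = 1 := by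
  simp [gaussPotential]

lemma gaussPotential_one_div_sq (x m s : ℝ) :
    gaussPotential x m (1 / s ^ 2) = Real.exp (-((x - m) / s) ^ 2 / 2) := by
  unfold gaussPotential
  ring_nf

lemma gaussDensity_eq_sqrt_mul_gaussPotential (x m v : ℝ) :
    gaussDensity x m v = √(2 * Real.pi * v)⁻¹ * gaussPotential x m v⁻¹ := by
  unfold gaussDensity gaussPotential
  rw [Real.sqrt_inv]
  ring_nf

lemma mul_sq_add_mul_sq {a b : ℝ} (hab : a + b ≠ 0) (x p q : ℝ) :
    a * (x - p) ^ 2 + b * (x - q) ^ 2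
      = a * b / (a + b) * (p - q) ^ 2 + (a + b) * (x - (a * p + b * q) / (a + b)) ^ 2 := by
  field_simp
  ring

lemma gaussPotential_mul_gaussPotential {a b : ℝ} (hab : a + b ≠ 0) (x p q : ℝ) :
    gaussPotential x p a * gaussPotential x q b
      = gaussPotential p q (a * b / (a + b))
          * gaussPotential x ((a * p + b * q) / (a + b)) (a + b) := by
  unfold gaussPotential
  rw [← Real.exp_add, ← Real.exp_add]
  congr 1
  linear_combination (-1 / 2 : ℝ) * mul_sq_add_mul_sq hab x p q

lemma gaussDensity_mul_gaussPotential {a b : ℝ} (ha : 0 < a) (hb : 0 ≤ b) (x y m : ℝ) :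
    gaussDensity x y a⁻¹ * gaussPotential x m b
      = √(a / (a + b)) * gaussPotential y m (a * b / (a + b))
          * gaussDensity x ((a * y + b * m) / (a + b)) (a + b)⁻¹ := by
  have hab : 0 < a + b := by positivity
  have hnorm :
      √(2 * Real.pi * a⁻¹)⁻¹ = √(a / (a + b)) * √(2 * Real.pi * (a + b)⁻¹)⁻¹ := by
    rw [← Real.sqrt_mul (by positivity)]
    congr 1
    field_simp
  rw [gaussDensity_eq_sqrt_mul_gaussPotential, gaussDensity_eq_sqrt_mul_gaussPotential,
    inv_inv, inv_inv, mul_assoc, gaussPotential_mul_gaussPotential hab.ne', hnorm]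
  ring

lemma wiener_backward_step {σθ s μ ρ' τ' ρ τ : ℝ} (hσθ : 0 < σθ) (hs : 0 < s)
    (hρ' : 0 ≤ ρ')
    (hρ : ρ = (1 / s ^ 2 + ρ' * (1 / σθ ^ 2)) /
      (1 / σθ ^ 2 + 1 / s ^ 2 + ρ' * (1 / σθ ^ 2)))
    (hτ : τ = ((1 / s ^ 2) * μ + ρ' * (1 / σθ ^ 2) * τ') /
      (1 / s ^ 2 + ρ' * (1 / σθ ^ 2))) :
    ∃ K > 0, ∀ x y : ℝ,
      gaussDensity x y (σθ ^ 2) * Real.exp (-((x - μ) / s) ^ 2 / 2)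
          * gaussPotential x τ' (ρ' * (1 / σθ ^ 2))
        = K * gaussDensity x
            (((1 / σθ ^ 2) * y + (1 / s ^ 2) * μ + ρ' * (1 / σθ ^ 2) * τ') /
              (1 / σθ ^ 2 + 1 / s ^ 2 + ρ' * (1 / σθ ^ 2)))
            ((σθ * √(1 - ρ)) ^ 2)
          * gaussPotential y τ (ρ * (1 / σθ ^ 2)) := by
  set lam := 1 / σθ ^ 2
  set l := 1 / s ^ 2
  set r := ρ' * lam
  have hlam : 0 < lam := by positivity
  have hσθ_sq : σθ ^ 2 = lam⁻¹ := by simp only [lam, one_div, inv_inv]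
  have hl : 0 < l := by positivity
  have hr : 0 ≤ r := by positivity
  have hlr : 0 < l + r := by positivity
  have h1ρ : 1 - ρ = lam / (lam + (l + r)) := by
    rw [hρ]
    field_simp
    ring
  have hvar : (σθ * √(1 - ρ)) ^ 2 = (lam + (l + r))⁻¹ := by
    rw [mul_pow, Real.sq_sqrt (by rw [h1ρ]; positivity), h1ρ, hσθ_sq]
    field_simp
  have hprec : lam * (l + r) / (lam + (l + r)) = ρ * lam := by
    rw [hρ]
    field_simp
    ring
  refine ⟨√(1 - ρ) * gaussPotential μ τ' (l * r / (l + r)),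
    mul_pos (Real.sqrt_pos.2 (by rw [h1ρ]; positivity)) (gaussPotential_pos _ _ _),
    fun x y => ?_⟩
  have hmean : (lam * y + (l + r) * τ) / (lam + (l + r))
      = (lam * y + l * μ + r * τ') / (lam + l + r) := by
    rw [hτ]
    field_simp
    ring
  calc gaussDensity x y (σθ ^ 2) * Real.exp (-((x - μ) / s) ^ 2 / 2) * gaussPotential x τ' r
      = gaussDensity x y lam⁻¹ * (gaussPotential x μ l * gaussPotential x τ' r) := by
        rw [← gaussPotential_one_div_sq, hσθ_sq, mul_assoc]
    _ = gaussPotential μ τ' (l * r / (l + r))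
          * (gaussDensity x y lam⁻¹ * gaussPotential x τ (l + r)) := by
        rw [gaussPotential_mul_gaussPotential hlr.ne', ← hτ]
        ring
    _ = _ := by
        rw [gaussDensity_mul_gaussPotential hlam hlr.le, hprec, hmean, hvar, h1ρ]
        ring

lemma prod_Icc_mul_eq_mul_prod_Icc {M : Type*} [CommMonoid M] {f g m : ℕ → M} (T : ℕ)
    (h : ∀ t ∈ Icc 1 T, f t * m t = g t * m (t - 1)) :
    (∏ t ∈ Icc 1 T, f t) * m T = m 0 * ∏ t ∈ Icc 1 T, g t := by
  induction T with
  | zero => simp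
  | succ T ih =>
    have hstep := h (T + 1) (by simp)
    rw [Nat.add_sub_cancel] at hstep
    rw [prod_Icc_succ_top (by omega), prod_Icc_succ_top (by omega), mul_assoc, hstep,
      ← mul_assoc, mul_right_comm, ih fun t ht => h t (Icc_subset_Icc_right (by omega) ht),
      mul_assoc]

theorem wiener_with_gaussian_potentials_is_lgm_general
    (T : ℕ) (σθ : ℝ) (hσθ : 0 < σθ)
    (μ σ : ℕ → ℝ) (hσ : ∀ t, 1 ≤ t → t ≤ T → 0 < σ t)
    (ρ τ : ℕ → ℝ)
    (hρT : ρ (T + 1) = 0)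
    (hρ : ∀ t, 1 ≤ t → t ≤ T →
      ρ t = (1 / (σ t) ^ 2 + ρ (t + 1) * (1 / σθ ^ 2)) /
            (1 / σθ ^ 2 + 1 / (σ t) ^ 2 + ρ (t + 1) * (1 / σθ ^ 2)))
    (hτ : ∀ t, 1 ≤ t → t ≤ T →
      τ t = ((1 / (σ t) ^ 2) * μ t + ρ (t + 1) * (1 / σθ ^ 2) * τ (t + 1)) /
            (1 / (σ t) ^ 2 + ρ (t + 1) * (1 / σθ ^ 2))) :
    ∃ c : ℝ, 0 < c ∧ ∀ θ : ℕ → ℝ, θ 0 = 0 →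
      (∏ t ∈ Finset.Icc 1 T, gaussDensity (θ t) (θ (t - 1)) (σθ ^ 2)) *
        (∏ t ∈ Finset.Icc 1 T, Real.exp (-((θ t - μ t) / σ t) ^ 2 / 2)) =
      c * ∏ t ∈ Finset.Icc 1 T,
        gaussDensity (θ t)
          (((1 / σθ ^ 2) * θ (t - 1) + (1 / (σ t) ^ 2) * μ t
              + ρ (t + 1) * (1 / σθ ^ 2) * τ (t + 1)) /
            (1 / σθ ^ 2 + 1 / (σ t) ^ 2 + ρ (t + 1) * (1 / σθ ^ 2)))
          ((σθ * Real.sqrt (1 - ρ t)) ^ 2) := by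
  have hρ_nonneg : ∀ t, 1 ≤ t → t ≤ T + 1 → 0 ≤ ρ t := fun t ht₁ htT =>
    Nat.decreasingInduction' (fun k hkT htk hk => by
      rw [hρ k (by omega) (by omega)]
      have := hσ k (by omega) (by omega)
      positivity) htT hρT.ge
  have hstep := fun t (ht : t ∈ Icc 1 T) =>
    have ht' := mem_Icc.1 ht
    wiener_backward_step hσθ (hσ t ht'.1 ht'.2) (hρ_nonneg (t + 1) (by omega) (by omega))
      (hρ t ht'.1 ht'.2) (hτ t ht'.1 ht'.2)
  choose! K hK_pos hK using hstep
  refine ⟨gaussPotential 0 (τ 1) (ρ 1 * (1 / σθ ^ 2)) * ∏ t ∈ Icc 1 T, K t,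
    mul_pos (gaussPotential_pos _ _ _) (prod_pos hK_pos), fun θ hθ₀ => ?_⟩
  have htelescope := prod_Icc_mul_eq_mul_prod_Icc
    (m := fun t => gaussPotential (θ t) (τ (t + 1)) (ρ (t + 1) * (1 / σθ ^ 2))) T
    fun t ht => by
      rw [hK t ht (θ t) (θ (t - 1)), Nat.sub_add_cancel (mem_Icc.1 ht).1]
  simp only [hρT, zero_mul, gaussPotential_zero, mul_one, zero_add, hθ₀] at htelescope
  rw [← prod_mul_distrib, htelescope, prod_mul_distrib, mul_assoc]

/-- **Theorem 1 (VTIRT).** Attaching Gaussian ability potentials to a discrete-time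
Wiener-process prior yields (up to normalization) a Linear Gaussian Model whose
conditional means and standard deviations are given by the backward recursions
for `ρ` and `τ`. -/
theorem wiener_with_gaussian_potentials_is_lgm
    (T : ℕ) (σθ : ℝ) (hσθ : 0 < σθ)
    (μ σ : ℕ → ℝ) (hσ : ∀ t, 1 ≤ t → t ≤ T → 0 < σ t)
    (ρ τ : ℕ → ℝ)
    (hρT : ρ (T + 1) = 0) (hτT : τ (T + 1) = 0)
    (hρ : ∀ t, 1 ≤ t → t ≤ T →
      ρ t = (1 / (σ t) ^ 2 + ρ (t + 1) * (1 / σθ ^ 2)) /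
            (1 / σθ ^ 2 + 1 / (σ t) ^ 2 + ρ (t + 1) * (1 / σθ ^ 2)))
    (hτ : ∀ t, 1 ≤ t → t ≤ T →
      τ t = ((1 / (σ t) ^ 2) * μ t + ρ (t + 1) * (1 / σθ ^ 2) * τ (t + 1)) /
            (1 / (σ t) ^ 2 + ρ (t + 1) * (1 / σθ ^ 2))) :
    ∃ c : ℝ, 0 < c ∧ ∀ θ : ℕ → ℝ, θ 0 = 0 →
      (∏ t ∈ Finset.Icc 1 T, gaussDensity (θ t) (θ (t - 1)) (σθ ^ 2)) *
        (∏ t ∈ Finset.Icc 1 T, Real.exp (-((θ t - μ t) / σ t) ^ 2 / 2)) =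
      c * ∏ t ∈ Finset.Icc 1 T,
        gaussDensity (θ t)
          (((1 / σθ ^ 2) * θ (t - 1) + (1 / (σ t) ^ 2) * μ t
              + ρ (t + 1) * (1 / σθ ^ 2) * τ (t + 1)) /
            (1 / σθ ^ 2 + 1 / (σ t) ^ 2 + ρ (t + 1) * (1 / σθ ^ 2)))
          ((σθ * Real.sqrt (1 - ρ t)) ^ 2) :=
  wiener_with_gaussian_potentials_is_lgm_general T σθ hσθ μ σ hσ ρ τ hρT hρ hτ
end

section
/- Expanding the quadratic form: for real numbers θ_0 = 0, θ_1, ..., θ_T, σ_θ > 0, σ_t > 0, μ_t, the expression ∑_{t=1}^T [((θ_t - θ_{t-1})/σ_θ)² + ((θ_t - μ_t)/σ_t)²] can be written as ∑_{t=1}^T ((θ_t - α_t θ_{t-1} - β_t)/s_t)² + C for constants α_t, β_t, s_t, C not depending on θ_{1:T}, where s_t = σ_θ√(α_t) and α_t, β_t satisfy the backward recursions α_t = λ_θ/(λ_θ + λ_t + (1-α_{t+1})λ_θ), β_t = (μ_t λ_t + β_{t+1}λ_θ)/(λ_θ + λ_t + (1-α_{t+1})λ_θ) with α_{T+1} = 1,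 β_{T+1} = 0. -/
open Finset

/-!
Write `a = 1/σθ²` and `l t = 1/σ t²`, and let `m t` be the quadratic in `θ (t-1)` that the
completed squares of the later terms leave behind. Processing `t = T, T-1, …, 1`, the terms at `t`
together with `m (t+1)` form a quadratic in `θ t`; completing the square in `θ t` produces the
new square, the next leftover `m t` and a constant, and the coefficients of `m t` are exactly
what the recursions for `α t, β t` feed back. The leftovers telescope: `m (T+1) = 0` because
`α (T+1) = 1` and `β (T+1) = 0`, and `m 1 = 0` because `θ 0 = 0`.
-/

/-- The precision of `θ t` once the terms after `t` have been absorbed. -/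
def posteriorPrecision (a : ℝ) (l α : ℕ → ℝ) (t : ℕ) : ℝ :=
  a + l t + (1 - α (t + 1)) * a

def leftoverQuadratic (a : ℝ) (α β θ : ℕ → ℝ) (t : ℕ) : ℝ :=
  (1 - α t) * a * θ (t - 1) ^ 2 - 2 * a * β t * θ (t - 1)

lemma posteriorPrecision_pos {a : ℝ} {l α : ℕ → ℝ} {t : ℕ} (ha : 0 < a) (hl : 0 < l t)
    (hα : α (t + 1) ≤ 1) : 0 < posteriorPrecision a l α t := by
  unfold posteriorPrecision
  nlinarith

lemma alpha_le_one {T : ℕ} {a : ℝ} {l α : ℕ → ℝ} (ha : 0 < a)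
    (hl : ∀ t, 1 ≤ t → t ≤ T → 0 < l t) (hαT : α (T + 1) = 1)
    (hα : ∀ t, 1 ≤ t → t ≤ T → α t = a / posteriorPrecision a l α t) :
    ∀ t, 1 ≤ t → t ≤ T + 1 → α t ≤ 1 := by
  intro t ht htT
  induction htT using Nat.decreasingInduction with
  | self => exact hαT.le
  | of_succ k hk ih =>
    have hΛ := posteriorPrecision_pos ha (hl k ht (by omega)) (ih (by omega))
    rw [hα k ht (by omega), div_le_one hΛ, posteriorPrecision]
    nlinarith [hl k ht (by omega), ih (by omega)]

lemma complete_square_step (a l μ α' β' α β Λ x y : ℝ) (hΛ : Λ = a + l + (1 - α') * a)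
    (hα : α * Λ = a) (hβ : β * Λ = μ * l + β' * a) :
    a * (x - y) ^ 2 + l * (x - μ) ^ 2 + ((1 - α') * a * x ^ 2 - 2 * a * β' * x) =
      Λ * (x - α * y - β) ^ 2 + ((1 - α) * a * y ^ 2 - 2 * a * β * y) +
        (l * μ ^ 2 - Λ * β ^ 2) := by
  subst hΛ
  linear_combination (2 * x * y - α * y ^ 2 - 2 * β * y) * hα + 2 * x * hβ

lemma sum_eq_sum_add_sum_of_telescope {M : Type*} [AddCommGroup M] {T : ℕ} {f g c m : ℕ → M}
    (h : ∀ t ∈ Icc 1 T, f t + m (t + 1) = g t + m t + c t) (hm1 : m 1 = 0)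
    (hmT : m (T + 1) = 0) :
    ∑ t ∈ Icc 1 T, f t = ∑ t ∈ Icc 1 T, g t + ∑ t ∈ Icc 1 T, c t := by
  have htel : ∑ t ∈ Icc 1 T, (m (t + 1) - m t) = 0 := by
    rcases Nat.eq_zero_or_pos T with rfl | hT
    · simp
    · rw [sum_Icc_sub (by omega), hmT, hm1, sub_zero]
  rw [← sum_add_distrib, ← sub_eq_zero, ← sum_sub_distrib, ← neg_eq_zero, ← htel,
    ← sum_neg_distrib]
  exact sum_congr rfl fun t ht => by linear_combination (norm := abel) -h t ht

lemma div_mul_sqrt_sq {σθ α Λ : ℝ} (z : ℝ) (hσθ : σθ ≠ 0) (hΛ : 0 < Λ)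
    (hα : α = 1 / σθ ^ 2 / Λ) : (z / (σθ * √α)) ^ 2 = Λ * z ^ 2 := by
  have hα0 : 0 ≤ α := by rw [hα]; positivity
  rw [div_pow, mul_pow, Real.sq_sqrt hα0, hα]
  field_simp

/-- Completion-of-squares identity at the heart of Theorem 1's proof: with `α, β`
given by the backward recursions and `s t = σθ * √(α t)`, the sum of the
prior-transition quadratics and the local-potential quadratics equals a sum of new
transition quadratics plus a constant `C` not depending on `θ`. -/
theorem completion_of_squares (T : ℕ) (σθ : ℝ) (hσθ : 0 < σθ)
    (σ μ : ℕ → ℝ) (hσ : ∀ t, 1 ≤ t → t ≤ T → 0 < σ t)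
    (α β : ℕ → ℝ) (hαT : α (T + 1) = 1) (hβT : β (T + 1) = 0)
    (hα : ∀ t, 1 ≤ t → t ≤ T →
      α t = (1 / σθ ^ 2) /
        (1 / σθ ^ 2 + 1 / (σ t) ^ 2 + (1 - α (t + 1)) * (1 / σθ ^ 2)))
    (hβ : ∀ t, 1 ≤ t → t ≤ T →
      β t = (μ t * (1 / (σ t) ^ 2) + β (t + 1) * (1 / σθ ^ 2)) /
        (1 / σθ ^ 2 + 1 / (σ t) ^ 2 + (1 - α (t + 1)) * (1 / σθ ^ 2)))
    (s : ℕ → ℝ) (hs : ∀ t, s t = σθ * Real.sqrt (α t)) :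
    ∃ C : ℝ, ∀ θ : ℕ → ℝ, θ 0 = 0 →
      ∑ t ∈ Finset.Icc 1 T,
          (((θ t - θ (t - 1)) / σθ) ^ 2 + ((θ t - μ t) / σ t) ^ 2) =
        (∑ t ∈ Finset.Icc 1 T, ((θ t - α t * θ (t - 1) - β t) / s t) ^ 2) + C := by
  set a := 1 / σθ ^ 2
  set l : ℕ → ℝ := fun t => 1 / σ t ^ 2
  set Λ := posteriorPrecision a l α
  have ha : 0 < a := by positivity
  have hl : ∀ t, 1 ≤ t → t ≤ T → 0 < l t := fun t h1 h2 => by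
    have := hσ t h1 h2
    positivity
  have hα_le := alpha_le_one ha hl hαT hα
  refine ⟨∑ t ∈ Icc 1 T, (l t * μ t ^ 2 - Λ t * β t ^ 2), fun θ hθ0 => ?_⟩
  refine sum_eq_sum_add_sum_of_telescope (m := leftoverQuadratic a α β θ) (fun t ht => ?_)
    (by simp [leftoverQuadratic, hθ0]) (by simp [leftoverQuadratic, hαT, hβT])
  obtain ⟨ht1, htT⟩ := mem_Icc.mp ht
  have hΛ : 0 < Λ t :=
    posteriorPrecision_pos ha (hl t ht1 htT) (hα_le (t + 1) (by omega) (by omega))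
  have hαΛ : α t * Λ t = a := by
    rw [hα t ht1 htT]
    exact div_mul_cancel₀ _ hΛ.ne'
  have hβΛ : β t * Λ t = μ t * l t + β (t + 1) * a := by
    rw [hβ t ht1 htT]
    exact div_mul_cancel₀ _ hΛ.ne'
  rw [hs, div_mul_sqrt_sq _ hσθ.ne' hΛ (hα t ht1 htT)]
  simp only [leftoverQuadratic, Nat.add_sub_cancel]
  linear_combination complete_square_step a (l t) (μ t) (α (t + 1)) (β (t + 1)) (α t) (β t)
    (Λ t) (θ t) (θ (t - 1)) rfl hαΛ hβΛ
end

section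
/- For the homogeneous case λ_t = λ for all t, the backward recursion ρ_t = (λ + ρ_{t+1}λ_θ)/(λ_θ + λ + ρ_{t+1}λ_θ), ρ_{T+1} = 0, produces a sequence that is monotonically non-increasing in t (ρ_1 ≥ ρ_2 ≥ ... ≥ ρ_T > ρ_{T+1} = 0) and, as T - t → ∞, ρ_t converges to the unique fixed point ρ* ∈ (0,1) of ρ = (λ + ρλ_θ)/(λ_θ + λ + ρλ_θ), i.e., the positive root of the fixed point equation ρ(λ_θ + λ + ρλ_θ) = λ + ρλ_θ. -/
/-- In the homogeneous case `λ t = λ`, the backward `ρ` recursion, viewed as the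
forward iteration `r 0 = 0`, `r (k+1) = (λ + r k * λθ)/(λθ + λ + r k * λθ)` (so that
`ρ t = r (T + 1 - t)`), is monotone non-decreasing in the iteration count, strictly
positive after the first step, and converges to the unique fixed point
`ρ* = (-λ + √(λ² + 4λλθ))/(2λθ) ∈ (0,1)` of `ρ (λθ + λ + ρ λθ) = λ + ρ λθ`. -/
theorem homogeneous_rho_convergence (lθ l : ℝ) (hlθ : 0 < lθ) (hl : 0 < l)
    (r : ℕ → ℝ) (hr0 : r 0 = 0)
    (hrec : ∀ k, r (k + 1) = (l + r k * lθ) / (lθ + l + r k * lθ))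
    (ρstar : ℝ) (hρstar : ρstar = (-l + Real.sqrt (l ^ 2 + 4 * l * lθ)) / (2 * lθ)) :
    Monotone r ∧ (∀ k, 1 ≤ k → 0 < r k) ∧
      0 < ρstar ∧ ρstar < 1 ∧
      ρstar * (lθ + l + ρstar * lθ) = l + ρstar * lθ ∧
      Filter.Tendsto r Filter.atTop (nhds ρstar) := by
  have hs2 : Real.sqrt (l ^ 2 + 4 * l * lθ) ^ 2 = l ^ 2 + 4 * l * lθ :=
    Real.sq_sqrt (by positivity)
  set s := Real.sqrt (l ^ 2 + 4 * l * lθ) with hs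
  have hs0 : 0 ≤ s := Real.sqrt_nonneg _
  have hsl : l < s := by nlinarith
  have hρpos : 0 < ρstar := by
    rw [hρstar]; apply div_pos (by linarith) (by linarith)
  have hρlt1 : ρstar < 1 := by
    rw [hρstar]
    rw [div_lt_one (by linarith)]
    nlinarith
  -- fixed point quadratic
  have hquad : lθ * ρstar ^ 2 + l * ρstar - l = 0 := by
    rw [hρstar]
    field_simp
    nlinarith [hs2]
  have hfix : ρstar * (lθ + l + ρstar * lθ) = l + ρstar * lθ := by nlinarith [hquad]
  -- invariant: 0 ≤ r k ≤ ρstar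
  have hinv : ∀ k, 0 ≤ r k ∧ r k ≤ ρstar := by
    intro k
    induction k with
    | zero => exact ⟨le_of_eq hr0.symm, by rw [hr0]; exact hρpos.le⟩
    | succ n ih =>
      obtain ⟨h0, h1⟩ := ih
      have hd : 0 < lθ + l + r n * lθ := by nlinarith
      constructor
      · rw [hrec]; apply div_nonneg (by nlinarith) hd.le
      · rw [hrec, div_le_iff₀ hd]
        nlinarith [mul_nonneg (mul_nonneg (sub_nonneg.2 h1) hlθ.le) (sub_nonneg.2 hρlt1.le)]
  -- monotone
  have hstep : ∀ k, r k ≤ r (k + 1) := by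
    intro k
    induction k with
    | zero => rw [hr0, hrec, hr0]; positivity
    | succ n ih =>
      obtain ⟨h0, _⟩ := hinv n
      obtain ⟨h0', _⟩ := hinv (n + 1)
      have hd : 0 < lθ + l + r n * lθ := by nlinarith
      have hd' : 0 < lθ + l + r (n + 1) * lθ := by nlinarith
      rw [hrec n, hrec (n + 1), div_le_div_iff₀ hd hd']
      nlinarith [mul_nonneg (sub_nonneg.2 ih) (mul_pos hlθ hlθ).le]
  have hmono : Monotone r := monotone_nat_of_le_succ hstep
  have hpos : ∀ k, 1 ≤ k → 0 < r k := by
    intro k hk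
    have h1 : 0 < r 1 := by
      rw [hrec, hr0]; positivity
    calc 0 < r 1 := h1
      _ ≤ r k := hmono hk
  -- convergence
  have hbdd : BddAbove (Set.range r) := ⟨ρstar, by rintro _ ⟨k, rfl⟩; exact (hinv k).2⟩
  have htend : Filter.Tendsto r Filter.atTop (nhds (⨆ k, r k)) :=
    tendsto_atTop_ciSup hmono hbdd
  set L := ⨆ k, r k with hL
  have hL0 : 0 ≤ L := (hinv 0).1.trans (le_ciSup hbdd 0)
  have hdL : 0 < lθ + l + L * lθ := by nlinarith
  -- limit of shifted sequence
  have htend1 : Filter.Tendsto (fun k => r (k + 1)) Filter.atTop (nhds L) :=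
    htend.comp (Filter.tendsto_add_atTop_nat 1)
  have htend2 : Filter.Tendsto (fun k => (l + r k * lθ) / (lθ + l + r k * lθ))
      Filter.atTop (nhds ((l + L * lθ) / (lθ + l + L * lθ))) := by
    apply Filter.Tendsto.div
    · exact (htend.mul_const lθ).const_add l
    · exact (htend.mul_const lθ).const_add (lθ + l)
    · exact hdL.ne'
  have hfixL : (l + L * lθ) / (lθ + l + L * lθ) = L := by
    apply tendsto_nhds_unique _ htend1
    exact htend2.congr (fun k => (hrec k).symm)
  have hquadL : lθ * L ^ 2 + l * L - l = 0 := by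
    have := hfixL
    field_simp at this
    nlinarith [this]
  have hLρ : L = ρstar := by
    have hfac : (L - ρstar) * (lθ * (L + ρstar) + l) = 0 := by
      linear_combination hquadL - hquad
    rcases mul_eq_zero.mp hfac with h | h
    · linarith
    · nlinarith
  exact ⟨hmono, hpos, hρpos, hρlt1, hfix, hLρ ▸ htend⟩
end
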